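/- arXiv:2104.09520 — 4 statements merged into one kernel-verified Lean document; each statement's English description precedes it below -/
import Mathlib

section
/- Let D ≥ 1, let ρ be a D×D complex density matrix, let F be a D×D positive semidefinite matrix with F ≤ I and p = Tr(Fρ) > 0, and let Ã_i = Σ_{k=1}^{K} a_k Π_k and Ã_j = Σ_{l=1}^{L} b_l Π'_l be Hermitian matrices given by spectral decompositions as in the context, with spectral gaps Δa = a_K − a_1 and Δb = b_L − b_1. Define the conditional Kirkwood–Dirac quasiprobabilities Q_{kl} = Tr(Π_k F Π'_l ρ)/p and the postselected quantum Fisher information entry in Kirkwood–Dirac form 𝓘^{ps}_{ij} = 4 Re[Σ_{k,l} a_k b_l Q_{kl} − (Σ_{k,l} a_k Q_{kl})(Σ_{k,l} b_l Q_{kl})]. If |𝓘^{ps}_{ij}| > Δa · Δb, then there exist indices k, l such that Q_{kl} is not a nonnegative real number (the Kirkwood–Dirac distribution is nonclassical, containing a negative value). -/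
lemma kd_cov_bound {ι : Type*} [Fintype ι] [Nonempty ι] (w x y : ι → ℝ)
    (hw : ∀ i, 0 ≤ w i) (hw1 : ∑ i, w i = 1)
    (xm xM ym yM : ℝ) (hx1 : ∀ i, xm ≤ x i) (hx2 : ∀ i, x i ≤ xM)
    (hy1 : ∀ i, ym ≤ y i) (hy2 : ∀ i, y i ≤ yM) :
    |(∑ i, w i * (x i * y i)) - (∑ i, w i * x i) * (∑ i, w i * y i)| ≤
      (xM - xm) * (yM - ym) / 4 := by
  set mx := ∑ i, w i * x i with hmx
  set my := ∑ i, w i * y i with hmy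
  -- variance bound
  have var_bd : ∀ (z : ι → ℝ) (zm zM : ℝ), (∀ i, zm ≤ z i) → (∀ i, z i ≤ zM) →
      ∑ i, w i * (z i - ∑ j, w j * z j) ^ 2 ≤ ((zM - zm) / 2) ^ 2 := by
    intro z zm zM hz1 hz2
    set mz := ∑ j, w j * z j with hmz
    set c := (zm + zM) / 2 with hc
    have key : ∑ i, w i * (z i - c) ^ 2
        = ∑ i, w i * (z i - mz) ^ 2 + (mz - c) ^ 2 := by
      have expand : ∀ i, w i * (z i - c) ^ 2
          = w i * (z i - mz) ^ 2 + (2 * (mz - c)) * (w i * z i)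
            + ((mz - c) ^ 2 - 2 * (mz - c) * mz) * w i := by
        intro i; ring
      rw [Finset.sum_congr rfl (fun i _ => expand i)]
      rw [Finset.sum_add_distrib, Finset.sum_add_distrib,
        ← Finset.mul_sum, ← Finset.mul_sum, ← hmz, hw1]
      ring
    have bd : ∑ i, w i * (z i - c) ^ 2 ≤ ((zM - zm) / 2) ^ 2 := by
      calc ∑ i, w i * (z i - c) ^ 2 ≤ ∑ i, w i * ((zM - zm) / 2) ^ 2 := by
            apply Finset.sum_le_sum
            intro i _
            apply mul_le_mul_of_nonneg_left _ (hw i)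
            have h1 : -((zM - zm)/2) ≤ z i - c := by
              have := hz1 i; simp only [hc]; linarith
            have h2 : z i - c ≤ (zM - zm)/2 := by
              have := hz2 i; simp only [hc]; linarith
            exact sq_le_sq' h1 h2
        _ = ((zM - zm) / 2) ^ 2 := by rw [← Finset.sum_mul, hw1, one_mul]
    nlinarith [sq_nonneg (mz - c)]
  -- covariance identity
  have hcov : (∑ i, w i * (x i * y i)) - mx * my
      = ∑ i, w i * ((x i - mx) * (y i - my)) := by
    have expand : ∀ i, w i * ((x i - mx) * (y i - my))
        = w i * (x i * y i) - my * (w i * x i) - mx * (w i * y i) + (mx * my) * w i := by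
      intro i; ring
    rw [Finset.sum_congr rfl (fun i _ => expand i)]
    rw [Finset.sum_add_distrib, Finset.sum_sub_distrib, Finset.sum_sub_distrib,
      ← Finset.mul_sum, ← Finset.mul_sum, ← Finset.mul_sum, ← hmx, ← hmy, hw1]
    ring
  -- Cauchy–Schwarz
  have cs : ((∑ i, w i * ((x i - mx) * (y i - my)))) ^ 2
      ≤ (∑ i, w i * (x i - mx) ^ 2) * ∑ i, w i * (y i - my) ^ 2 :=
    Finset.sum_sq_le_sum_mul_sum_of_sq_eq_mul Finset.univ
      (fun i _ => mul_nonneg (hw i) (sq_nonneg _))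
      (fun i _ => mul_nonneg (hw i) (sq_nonneg _))
      (fun i _ => by ring)
  have hx0 : xm ≤ xM := le_trans (hx1 (Classical.arbitrary ι)) (hx2 (Classical.arbitrary ι))
  have hy0 : ym ≤ yM := le_trans (hy1 (Classical.arbitrary ι)) (hy2 (Classical.arbitrary ι))
  have vb1 := var_bd x xm xM hx1 hx2
  have vb2 := var_bd y ym yM hy1 hy2
  have varx_nn : 0 ≤ ∑ i, w i * (x i - mx) ^ 2 :=
    Finset.sum_nonneg fun i _ => mul_nonneg (hw i) (sq_nonneg _)
  have vary_nn : 0 ≤ ∑ i, w i * (y i - my) ^ 2 :=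
    Finset.sum_nonneg fun i _ => mul_nonneg (hw i) (sq_nonneg _)
  rw [hcov]
  have sq_bd : (∑ i, w i * ((x i - mx) * (y i - my))) ^ 2
      ≤ ((xM - xm) * (yM - ym) / 4) ^ 2 := by nlinarith
  have h4 : 0 ≤ (xM - xm) * (yM - ym) / 4 := by
    have : 0 ≤ xM - xm := by linarith
    have : 0 ≤ yM - ym := by linarith
    positivity
  calc |∑ i, w i * ((x i - mx) * (y i - my))|
      = Real.sqrt ((∑ i, w i * ((x i - mx) * (y i - my))) ^ 2) := (Real.sqrt_sq_eq_abs _).symm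
    _ ≤ Real.sqrt (((xM - xm) * (yM - ym) / 4) ^ 2) := Real.sqrt_le_sqrt sq_bd
    _ = (xM - xm) * (yM - ym) / 4 := Real.sqrt_sq h4


open scoped ComplexOrder in
open Matrix Finset in
/-- **Theorem 1 (Necessary condition for anomalous postselected QFIM).**
If the postselected quantum Fisher information entry, written in Kirkwood–Dirac form,
exceeds the product of the spectral gaps, then the conditional Kirkwood–Dirac
quasiprobability distribution contains a value that is not a nonnegative real number. -/
theorem anomalous_psqfim_implies_kd_negativity
    (D K L : ℕ) (hD : 1 ≤ D)
    (ρ F : Matrix (Fin D) (Fin D) ℂ)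
    (hρ : ρ.PosSemidef) (hρtr : ρ.trace = 1)
    (hF : F.PosSemidef) (hFle : (1 - F).PosSemidef)
    (p : ℝ) (hp : 0 < p) (hpdef : (F * ρ).trace = (p : ℂ))
    (a : Fin (K + 1) → ℝ) (b : Fin (L + 1) → ℝ)
    (ha : Monotone a) (hb : Monotone b)
    (Pi_ : Fin (K + 1) → Matrix (Fin D) (Fin D) ℂ)
    (Pj : Fin (L + 1) → Matrix (Fin D) (Fin D) ℂ)
    (hPi_herm : ∀ k, (Pi_ k)ᴴ = Pi_ k)
    (hPi_idem : ∀ k, Pi_ k * Pi_ k = Pi_ k)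
    (hPi_orth : ∀ k k', k ≠ k' → Pi_ k * Pi_ k' = 0)
    (hPi_sum : ∑ k, Pi_ k = 1)
    (hPjherm : ∀ l, (Pj l)ᴴ = Pj l)
    (hPjidem : ∀ l, Pj l * Pj l = Pj l)
    (hPjorth : ∀ l l', l ≠ l' → Pj l * Pj l' = 0)
    (hPjsum : ∑ l, Pj l = 1)
    -- conditional Kirkwood–Dirac quasiprobabilities
    (Q : Fin (K + 1) → Fin (L + 1) → ℂ)
    (hQ : ∀ k l, Q k l = (Pi_ k * F * Pj l * ρ).trace / (p : ℂ))
    -- spectral gaps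
    (Δa Δb : ℝ)
    (hΔa : Δa = a (Fin.last K) - a 0) (hΔb : Δb = b (Fin.last L) - b 0)
    -- postselected QFIM entry in Kirkwood–Dirac form
    (𝓘ps : ℝ)
    (h𝓘 : 𝓘ps = 4 * ((∑ k, ∑ l, (a k : ℂ) * (b l : ℂ) * Q k l -
        (∑ k, ∑ l, (a k : ℂ) * Q k l) * (∑ k, ∑ l, (b l : ℂ) * Q k l)).re))
    (hanom : |𝓘ps| > Δa * Δb) :
    ∃ k l, ¬ ∃ r : ℝ, 0 ≤ r ∧ Q k l = (r : ℂ) := by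
  by_contra hcon
  push_neg at hcon
  choose r hr0 hrQ using hcon
  -- sum of Q is 1
  have hsum : (∑ k, ∑ l, Pi_ k * F * Pj l * ρ) = F * ρ := by
    have h1 : ∀ k, ∑ l, Pi_ k * F * Pj l * ρ = Pi_ k * F * ρ := by
      intro k
      rw [← Finset.sum_mul, ← Finset.mul_sum, hPjsum, mul_one]
    rw [Finset.sum_congr rfl (fun k _ => h1 k), ← Finset.sum_mul, ← Finset.sum_mul,
      hPi_sum, one_mul]
  have hQsum : ∑ k, ∑ l, Q k l = 1 := by
    simp_rw [hQ, ← Finset.sum_div]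
    conv_lhs => rw [show (∑ k, ∑ l, (Pi_ k * F * Pj l * ρ).trace) =
      (∑ k, ∑ l, Pi_ k * F * Pj l * ρ).trace by simp [Matrix.trace_sum]]
    rw [hsum, hpdef, div_self]
    exact_mod_cast hp.ne'
  have hr1 : ∑ k, ∑ l, r k l = 1 := by
    have : ((∑ k, ∑ l, r k l : ℝ) : ℂ) = 1 := by
      push_cast
      simp_rw [← hrQ]
      exact hQsum
    exact_mod_cast this
  -- express 𝓘ps in terms of real sums
  have e1 : (∑ k, ∑ l, (a k : ℂ) * (b l : ℂ) * Q k l)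
      = ((∑ k, ∑ l, a k * b l * r k l : ℝ) : ℂ) := by
    simp_rw [hrQ]; push_cast; ring
  have e2 : (∑ k, ∑ l, (a k : ℂ) * Q k l) = ((∑ k, ∑ l, a k * r k l : ℝ) : ℂ) := by
    simp_rw [hrQ]; push_cast; ring
  have e3 : (∑ k, ∑ l, (b l : ℂ) * Q k l) = ((∑ k, ∑ l, b l * r k l : ℝ) : ℂ) := by
    simp_rw [hrQ]; push_cast; ring
  have h𝓘' : 𝓘ps = 4 * ((∑ k, ∑ l, a k * b l * r k l)
      - (∑ k, ∑ l, a k * r k l) * (∑ k, ∑ l, b l * r k l)) := by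
    rw [h𝓘, e1, e2, e3]
    norm_cast
  -- apply covariance bound on the product type
  have key := kd_cov_bound (ι := Fin (K + 1) × Fin (L + 1))
    (fun q => r q.1 q.2) (fun q => a q.1) (fun q => b q.2)
    (fun q => hr0 q.1 q.2)
    (by rw [Fintype.sum_prod_type]; exact hr1)
    (a 0) (a (Fin.last K)) (b 0) (b (Fin.last L))
    (fun q => ha (Fin.zero_le _)) (fun q => ha (Fin.le_last _))
    (fun q => hb (Fin.zero_le _)) (fun q => hb (Fin.le_last _))
  rw [Fintype.sum_prod_type, Fintype.sum_prod_type, Fintype.sum_prod_type] at key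
  have hb1 : (∑ k, ∑ l, a k * b l * r k l)
      = ∑ k, ∑ l, r k l * (a k * b l) := by
    congr 1; funext k; exact Finset.sum_congr rfl (fun l _ => by ring)
  have hb2 : (∑ k, ∑ l, a k * r k l) = ∑ k, ∑ l, r k l * a k := by
    congr 1; funext k; exact Finset.sum_congr rfl (fun l _ => by ring)
  have hb3 : (∑ k, ∑ l, b l * r k l) = ∑ k, ∑ l, r k l * b l := by
    congr 1; funext k; exact Finset.sum_congr rfl (fun l _ => by ring)
  rw [h𝓘', hΔa, hΔb, hb1, hb2, hb3] at hanom
  have habs : |4 * ((∑ k, ∑ l, r k l * (a k * b l))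
      - (∑ k, ∑ l, r k l * a k) * (∑ k, ∑ l, r k l * b l))|
      ≤ (a (Fin.last K) - a 0) * (b (Fin.last L) - b 0) := by
    rw [abs_mul]
    calc |(4:ℝ)| * _ ≤ 4 * ((a (Fin.last K) - a 0) * (b (Fin.last L) - b 0) / 4) := by
          rw [abs_of_nonneg (by norm_num : (0:ℝ) ≤ 4)]
          exact mul_le_mul_of_nonneg_left key (by norm_num)
      _ = (a (Fin.last K) - a 0) * (b (Fin.last L) - b 0) := by ring
  linarith [hanom, habs]
end

section
/- Let D ≥ 1, let ρ be a D×D complex density matrix, let F be a D×D positive semidefinite matrix with F ≤ I and p = Tr(Fρ) > 0, and let Ã_i = Σ_{k=1}^{K} a_k Π_k and Ã_j = Σ_{l=1}^{L} b_l Π'_l be Hermitian matrices with spectral gaps Δa = a_K − a_1 and Δb = b_L − b_1. Suppose the matrices ρ, F, Ã_i, Ã_j (equivalently, ρ, F and all the projections Π_k, Π'_l) pairwise commute. Then the postselected quantum Fisher information entry in Kirkwood–Dirac form satisfies |𝓘^{ps}_{ij}| ≤ Δa · Δb, where Q_{kl} = Tr(Π_k F Π'_l ρ)/p and 𝓘^{ps}_{ij}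 = 4 Re[Σ_{k,l} a_k b_l Q_{kl} − (Σ_{k,l} a_k Q_{kl})(Σ_{k,l} b_l Q_{kl})]. -/
/-!
When `F`, `Π_k` and `Π'_l` commute, `S = Π_k Π'_l` is an orthogonal projection and
`Π_k F Π'_l = S F S` is positive semidefinite, so `Tr(Π_k F Π'_l ρ) ≥ 0`. The `Q_{kl}` are then
a genuine probability distribution on pairs `(k, l)` (they sum to `Tr(Fρ) / p = 1`), and
`𝓘^{ps} / 4` is the covariance of `a_k` and `b_l` under it. Grüss' inequality, i.e. Cauchy–Schwarz
combined with Popoviciu's variance bound, bounds that covariance by `Δa Δb / 4`.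
-/

open Finset

section WeightedCovariance

variable {ι : Type*} [Fintype ι]

def weightedCov (w x y : ι → ℝ) : ℝ :=
  ∑ i, w i * (x i * y i) - (∑ i, w i * x i) * ∑ i, w i * y i

variable {w : ι → ℝ}

lemma weightedCov_eq_sum_mul_sub_mul_sub (hsum : ∑ i, w i = 1) (x y : ι → ℝ) :
    weightedCov w x y = ∑ i, w i * ((x i - ∑ j, w j * x j) * (y i - ∑ j, w j * y j)) := by
  set μx := ∑ j, w j * x j
  set μy := ∑ j, w j * y j
  have expand : ∀ i, w i * ((x i - μx) * (y i - μy))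
      = w i * (x i * y i) - μy * (w i * x i) - μx * (w i * y i) + μx * μy * w i :=
    fun i => by ring
  simp only [expand, sum_add_distrib, sum_sub_distrib, ← mul_sum, hsum]
  unfold weightedCov
  ring

lemma weightedCov_self_nonneg (hw : ∀ i, 0 ≤ w i) (hsum : ∑ i, w i = 1) (x : ι → ℝ) :
    0 ≤ weightedCov w x x := by
  rw [weightedCov_eq_sum_mul_sub_mul_sub hsum]
  exact sum_nonneg fun i _ => mul_nonneg (hw i) (mul_self_nonneg _)

lemma weightedCov_sq_le (hw : ∀ i, 0 ≤ w i) (hsum : ∑ i, w i = 1) (x y : ι → ℝ) :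
    weightedCov w x y ^ 2 ≤ weightedCov w x x * weightedCov w y y := by
  simp only [weightedCov_eq_sum_mul_sub_mul_sub hsum]
  refine sum_sq_le_sum_mul_sum_of_sq_le_mul _ (fun i _ => mul_nonneg (hw i) (mul_self_nonneg _))
    (fun i _ => mul_nonneg (hw i) (mul_self_nonneg _)) fun i _ => le_of_eq ?_
  ring

/-- Popoviciu: `0 ≤ ∑ w (M - x) (x - m)` bounds the variance by
`(M - μ) (μ - m) ≤ ((M - m) / 2) ^ 2`. -/
lemma weightedCov_self_le (hw : ∀ i, 0 ≤ w i) (hsum : ∑ i, w i = 1) {x : ι → ℝ} {m M : ℝ}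
    (hm : ∀ i, m ≤ x i) (hM : ∀ i, x i ≤ M) :
    weightedCov w x x ≤ ((M - m) / 2) ^ 2 := by
  have h := sum_nonneg fun i (_ : i ∈ univ) =>
    mul_nonneg (hw i) (mul_nonneg (sub_nonneg.2 (hM i)) (sub_nonneg.2 (hm i)))
  have expand : ∀ i, w i * ((M - x i) * (x i - m))
      = (M + m) * (w i * x i) - w i * (x i * x i) - M * m * w i :=
    fun i => by ring
  simp only [expand, sum_sub_distrib, ← mul_sum, hsum] at h
  unfold weightedCov
  nlinarith [sq_nonneg (∑ i, w i * x i - (M + m) / 2)]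

lemma abs_weightedCov_le (hw : ∀ i, 0 ≤ w i) (hsum : ∑ i, w i = 1) {x y : ι → ℝ}
    {mx Mx my My : ℝ} (hmx : ∀ i, mx ≤ x i) (hMx : ∀ i, x i ≤ Mx)
    (hmy : ∀ i, my ≤ y i) (hMy : ∀ i, y i ≤ My) :
    |weightedCov w x y| ≤ (Mx - mx) * (My - my) / 4 := by
  obtain ⟨i, -⟩ := nonempty_of_sum_ne_zero (hsum.trans_ne one_ne_zero)
  have hΔx : 0 ≤ Mx - mx := sub_nonneg.2 ((hmx i).trans (hMx i))
  have hΔy : 0 ≤ My - my := sub_nonneg.2 ((hmy i).trans (hMy i))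
  refine abs_le_of_sq_le_sq ?_ (by positivity)
  calc weightedCov w x y ^ 2 ≤ weightedCov w x x * weightedCov w y y :=
        weightedCov_sq_le hw hsum x y
    _ ≤ ((Mx - mx) / 2) ^ 2 * ((My - my) / 2) ^ 2 :=
        mul_le_mul (weightedCov_self_le hw hsum hmx hMx) (weightedCov_self_le hw hsum hmy hMy)
          (weightedCov_self_nonneg hw hsum y) (sq_nonneg _)
    _ = ((Mx - mx) * (My - my) / 4) ^ 2 := by ring

end WeightedCovariance

lemma sum_sum_mul_mul_mul_eq_of_sum_eq_one {A ι κ : Type*} [Semiring A] [Fintype ι] [Fintype κ]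
    {P : ι → A} {R : κ → A} (hP : ∑ k, P k = 1) (hR : ∑ l, R l = 1) (F ρ : A) :
    ∑ k, ∑ l, P k * F * R l * ρ = F * ρ := by
  simp only [← sum_mul, ← mul_sum, hP, hR, mul_one, one_mul]

namespace Matrix

open scoped ComplexOrder MatrixOrder

variable {n 𝕜 : Type*} [Fintype n] [RCLike 𝕜]

lemma PosSemidef.trace_mul_nonneg [DecidableEq n] {A B : Matrix n n 𝕜} (hA : A.PosSemidef)
    (hB : B.PosSemidef) :
    0 ≤ (A * B).trace := by
  have hB' : 0 ≤ B := nonneg_iff_posSemidef.2 hB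
  have hr : (CFC.sqrt B)ᴴ = CFC.sqrt B := (IsSelfAdjoint.of_nonneg (CFC.sqrt_nonneg B)).star_eq
  rw [← CFC.sqrt_mul_sqrt_self B hB', ← mul_assoc, trace_mul_cycle]
  nth_rw 2 [← hr]
  exact (hA.mul_mul_conjTranspose_same _).trace_nonneg

lemma PosSemidef.mul_mul_of_commute {F P R : Matrix n n 𝕜} (hF : F.PosSemidef)
    (hP : Pᴴ = P) (hPP : P * P = P) (hR : Rᴴ = R) (hRR : R * R = R)
    (hFP : Commute F P) (hFR : Commute F R) (hPR : Commute P R) :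
    (P * F * R).PosSemidef := by
  have hSS : P * R * (P * R) = P * R := by
    rw [mul_assoc, ← mul_assoc R, ← hPR.eq, mul_assoc, hRR, ← mul_assoc, hPP]
  have hFS : Commute F (P * R) := hFP.mul_right hFR
  have hS : (P * R)ᴴ = P * R := by rw [conjTranspose_mul, hP, hR, hPR.eq]
  convert hF.mul_mul_conjTranspose_same (P * R) using 1
  rw [hS, mul_assoc (P * R) F, hFS.eq, ← mul_assoc, hSS, mul_assoc P R F, ← hFR.eq, ← mul_assoc]

end Matrix

lemma weightedCov_prod_eq_re {ι κ : Type*} [Fintype ι] [Fintype κ] (w : ι × κ → ℝ)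
    (a : ι → ℝ) (b : κ → ℝ) :
    weightedCov w (fun i => a i.1) (fun i => b i.2) =
      (∑ k, ∑ l, (a k : ℂ) * b l * w (k, l) -
        (∑ k, ∑ l, (a k : ℂ) * w (k, l)) * ∑ k, ∑ l, (b l : ℂ) * w (k, l)).re := by
  rw [← Complex.ofReal_re (weightedCov _ _ _)]
  congr 1
  unfold weightedCov
  push_cast [Fintype.sum_prod_type]
  simp only [mul_comm]

open scoped ComplexOrder in
open Matrix Finset in
theorem commuting_psqfim_bounded_general
    (D K L : ℕ)
    (ρ F : Matrix (Fin D) (Fin D) ℂ)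
    (hρ : ρ.PosSemidef)
    (hF : F.PosSemidef)
    (p : ℝ) (hp : 0 < p) (hpdef : (F * ρ).trace = (p : ℂ))
    (a : Fin (K + 1) → ℝ) (b : Fin (L + 1) → ℝ)
    (ha : Monotone a) (hb : Monotone b)
    (Pi_ : Fin (K + 1) → Matrix (Fin D) (Fin D) ℂ)
    (Pj : Fin (L + 1) → Matrix (Fin D) (Fin D) ℂ)
    (hPi_herm : ∀ k, (Pi_ k)ᴴ = Pi_ k)
    (hPi_idem : ∀ k, Pi_ k * Pi_ k = Pi_ k)
    (hPi_sum : ∑ k, Pi_ k = 1)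
    (hPjherm : ∀ l, (Pj l)ᴴ = Pj l)
    (hPjidem : ∀ l, Pj l * Pj l = Pj l)
    (hPjsum : ∑ l, Pj l = 1)
    -- pairwise commutation of ρ, F and all the projections
    (hFPi : ∀ k, Commute F (Pi_ k)) (hFPj : ∀ l, Commute F (Pj l))
    (hPiPj : ∀ k l, Commute (Pi_ k) (Pj l))
    -- conditional Kirkwood–Dirac quasiprobabilities
    (Q : Fin (K + 1) → Fin (L + 1) → ℂ)
    (hQ : ∀ k l, Q k l = (Pi_ k * F * Pj l * ρ).trace / (p : ℂ))
    -- spectral gaps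
    (Δa Δb : ℝ)
    (hΔa : Δa = a (Fin.last K) - a 0) (hΔb : Δb = b (Fin.last L) - b 0)
    -- postselected QFIM entry in Kirkwood–Dirac form
    (𝓘ps : ℝ)
    (h𝓘 : 𝓘ps = 4 * ((∑ k, ∑ l, (a k : ℂ) * (b l : ℂ) * Q k l -
        (∑ k, ∑ l, (a k : ℂ) * Q k l) * (∑ k, ∑ l, (b l : ℂ) * Q k l)).re)) :
    |𝓘ps| ≤ Δa * Δb := by
  have hT : ∀ k l, 0 ≤ (Pi_ k * F * Pj l * ρ).trace := fun k l =>
    (hF.mul_mul_of_commute (hPi_herm k) (hPi_idem k) (hPjherm l) (hPjidem l) (hFPi k) (hFPj l)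
      (hPiPj k l)).trace_mul_nonneg hρ
  set w : Fin (K + 1) × Fin (L + 1) → ℝ := fun i => (Pi_ i.1 * F * Pj i.2 * ρ).trace.re / p
  have hw : ∀ i, 0 ≤ w i := fun i => div_nonneg (Complex.nonneg_iff.1 (hT i.1 i.2)).1 hp.le
  have hsum : ∑ i, w i = 1 := by
    have hT_sum : ∑ k, ∑ l, (Pi_ k * F * Pj l * ρ).trace = p := by
      simp only [← trace_sum, sum_sum_mul_mul_mul_eq_of_sum_eq_one hPi_sum hPjsum, hpdef]
    simp only [w, ← sum_div, Fintype.sum_prod_type, ← Complex.re_sum, hT_sum, Complex.ofReal_re,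
      div_self hp.ne']
  have hQw : ∀ k l, Q k l = w (k, l) := fun k l => by
    rw [hQ, Complex.eq_re_of_ofReal_le (hT k l), Complex.ofReal_div]
  have h𝓘w : 𝓘ps = 4 * weightedCov w (fun i => a i.1) (fun i => b i.2) := by
    simp only [h𝓘, hQw, weightedCov_prod_eq_re]
  have hcov := abs_weightedCov_le hw hsum (fun i => ha (Fin.zero_le i.1))
    (fun i => ha (Fin.le_last i.1)) (fun i => hb (Fin.zero_le i.2)) (fun i => hb (Fin.le_last i.2))
  rw [h𝓘w, hΔa, hΔb, abs_mul, abs_of_pos four_pos]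
  linarith

open scoped ComplexOrder in
open Matrix Finset in
/-- **Corollary 1.** In a classically commuting theory (all relevant operators pairwise
commute), the postselected quantum Fisher information entry in Kirkwood–Dirac form is
bounded by the product of the spectral gaps: |𝓘^{ps}_{ij}| ≤ Δa · Δb. -/
theorem commuting_psqfim_bounded
    (D K L : ℕ) (hD : 1 ≤ D)
    (ρ F : Matrix (Fin D) (Fin D) ℂ)
    (hρ : ρ.PosSemidef) (hρtr : ρ.trace = 1)
    (hF : F.PosSemidef) (hFle : (1 - F).PosSemidef)
    (p : ℝ) (hp : 0 < p) (hpdef : (F * ρ).trace = (p : ℂ))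
    (a : Fin (K + 1) → ℝ) (b : Fin (L + 1) → ℝ)
    (ha : Monotone a) (hb : Monotone b)
    (Pi_ : Fin (K + 1) → Matrix (Fin D) (Fin D) ℂ)
    (Pj : Fin (L + 1) → Matrix (Fin D) (Fin D) ℂ)
    (hPi_herm : ∀ k, (Pi_ k)ᴴ = Pi_ k)
    (hPi_idem : ∀ k, Pi_ k * Pi_ k = Pi_ k)
    (hPi_orth : ∀ k k', k ≠ k' → Pi_ k * Pi_ k' = 0)
    (hPi_sum : ∑ k, Pi_ k = 1)
    (hPjherm : ∀ l, (Pj l)ᴴ = Pj l)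
    (hPjidem : ∀ l, Pj l * Pj l = Pj l)
    (hPjorth : ∀ l l', l ≠ l' → Pj l * Pj l' = 0)
    (hPjsum : ∑ l, Pj l = 1)
    -- pairwise commutation of ρ, F and all the projections
    (hρF : Commute ρ F)
    (hρPi : ∀ k, Commute ρ (Pi_ k)) (hρPj : ∀ l, Commute ρ (Pj l))
    (hFPi : ∀ k, Commute F (Pi_ k)) (hFPj : ∀ l, Commute F (Pj l))
    (hPiPj : ∀ k l, Commute (Pi_ k) (Pj l))
    -- conditional Kirkwood–Dirac quasiprobabilities
    (Q : Fin (K + 1) → Fin (L + 1) → ℂ)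
    (hQ : ∀ k l, Q k l = (Pi_ k * F * Pj l * ρ).trace / (p : ℂ))
    -- spectral gaps
    (Δa Δb : ℝ)
    (hΔa : Δa = a (Fin.last K) - a 0) (hΔb : Δb = b (Fin.last L) - b 0)
    -- postselected QFIM entry in Kirkwood–Dirac form
    (𝓘ps : ℝ)
    (h𝓘 : 𝓘ps = 4 * ((∑ k, ∑ l, (a k : ℂ) * (b l : ℂ) * Q k l -
        (∑ k, ∑ l, (a k : ℂ) * Q k l) * (∑ k, ∑ l, (b l : ℂ) * Q k l)).re)) :
    |𝓘ps| ≤ Δa * Δb :=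
  commuting_psqfim_bounded_general D K L ρ F hρ hF p hp hpdef a b ha hb Pi_ Pj hPi_herm hPi_idem
    hPi_sum hPjherm hPjidem hPjsum hFPi hFPj hPiPj Q hQ Δa Δb hΔa hΔb 𝓘ps h𝓘
end

section
/- Let ψ : ℝ^M → ℂ^D be a differentiable family of unit vectors, let K be a D×D complex matrix, set F = K†K, and suppose p(θ) = ⟨ψ(θ), F ψ(θ)⟩ > 0 on a neighborhood of θ. Define the postselected family ψ^{ps}(θ) = K ψ(θ)/√(p(θ)). Then ψ^{ps}(θ) is a unit vector and the pure-state quantum Fisher information matrix of ψ^{ps} satisfies, for all i, j: 𝓘_{ij}(θ | ψ^{ps}) = 4 Re[ ⟨∂_iψ(θ), F ∂_jψ(θ)⟩ / p(θ) − ⟨∂_iψ(θ), F ψ(θ)⟩ ⟨ψ(θ), F ∂_jψ(θ)⟩ / p(θ)² ]. -/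
noncomputable section

/-- Standard Hermitian inner product on `ℂ^D`, conjugate-linear in the first argument. -/
def dotc {D : ℕ} (x y : Fin D → ℂ) : ℂ := ∑ d, starRingEnd ℂ (x d) * y d

/-- Partial derivative of a parametrized family with respect to the `i`-th parameter. -/
def pder {M D : ℕ} (i : Fin M) (φ : (Fin M → ℝ) → (Fin D → ℂ)) (θ : Fin M → ℝ) :
    Fin D → ℂ :=
  fderiv ℝ φ θ (Pi.single i 1)

/-- Pure-state quantum Fisher information matrix entry
`𝓘_{ij}(θ|φ) = 4 Re[⟨∂_iφ,∂_jφ⟩ − ⟨∂_iφ,φ⟩⟨φ,∂_jφ⟩]`. -/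
def qfim {M D : ℕ} (φ : (Fin M → ℝ) → (Fin D → ℂ)) (θ : Fin M → ℝ) (i j : Fin M) : ℝ :=
  4 * (dotc (pder i φ θ) (pder j φ θ) -
        dotc (pder i φ θ) (φ θ) * dotc (φ θ) (pder j φ θ)).re

/-!
Write `ψps = g • Kψ` with the real scale `g = p^{-1/2}`, so that `∂ψps = (∂g) Kψ + g K∂ψ`.
Since `g` is real and `g Kψ` is a unit vector, the contributions of `∂g` to
`⟨∂ψps, ∂ψps⟩` and to `⟨∂ψps, ψps⟩⟨ψps, ∂ψps⟩` are equal and cancel, leaving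
`g² ⟨K∂ψ, K∂ψ⟩ - g⁴ ⟨K∂ψ, Kψ⟩⟨Kψ, K∂ψ⟩`. Then `⟨Kx, Ky⟩ = ⟨x, F y⟩` and `g² = 1/p`.
-/

open Matrix

section dotc

variable {D : ℕ}

lemma dotc_add_left (x y z : Fin D → ℂ) : dotc (x + y) z = dotc x z + dotc y z := by
  simp [dotc, add_mul, Finset.sum_add_distrib]

lemma dotc_add_right (x y z : Fin D → ℂ) : dotc x (y + z) = dotc x y + dotc x z := by
  simp [dotc, mul_add, Finset.sum_add_distrib]

lemma dotc_real_smul_left (r : ℝ) (x y : Fin D → ℂ) : dotc (r • x) y = r * dotc x y := by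
  simp [dotc, Finset.mul_sum, mul_assoc]

lemma dotc_real_smul_right (r : ℝ) (x y : Fin D → ℂ) : dotc x (r • y) = r * dotc x y := by
  simp [dotc, Finset.mul_sum, mul_left_comm]

lemma dotc_self_eq_re (x : Fin D → ℂ) : dotc x x = (dotc x x).re := by
  refine (Complex.conj_eq_iff_re.mp ?_).symm
  simp [dotc, map_sum, mul_comm]

lemma dotc_mulVec_mulVec (K : Matrix (Fin D) (Fin D) ℂ) (x y : Fin D → ℂ) :
    dotc (K *ᵥ x) (K *ᵥ y) = dotc x ((Kᴴ * K) *ᵥ y) := by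
  change star (K *ᵥ x) ⬝ᵥ (K *ᵥ y) = star x ⬝ᵥ ((Kᴴ * K) *ᵥ y)
  rw [star_mulVec, dotProduct_mulVec, dotProduct_mulVec, vecMul_vecMul]

lemma DifferentiableAt.dotc {E : Type*} [NormedAddCommGroup E] [NormedSpace ℝ E]
    {f g : E → Fin D → ℂ} {x : E} (hf : DifferentiableAt ℝ f x) (hg : DifferentiableAt ℝ g x) :
    DifferentiableAt ℝ (fun y => _root_.dotc (f y) (g y)) x := by
  unfold _root_.dotc
  have hf' := differentiableAt_pi.1 hf
  have hg' := differentiableAt_pi.1 hg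
  fun_prop

lemma DifferentiableAt.mulVec {E : Type*} [NormedAddCommGroup E] [NormedSpace ℝ E]
    (K : Matrix (Fin D) (Fin D) ℂ) {f : E → Fin D → ℂ} {x : E} (hf : DifferentiableAt ℝ f x) :
    DifferentiableAt ℝ (fun y => K *ᵥ f y) x := by
  unfold Matrix.mulVec dotProduct
  have hf' := differentiableAt_pi.1 hf
  fun_prop

lemma dotc_sub_dotc_mul_dotc_of_real_smul (g a b : ℝ) (φ x y : Fin D → ℂ)
    (hunit : (g : ℂ) ^ 2 * dotc φ φ = 1) :
    dotc (a • φ + g • x) (b • φ + g • y) -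
        dotc (a • φ + g • x) (g • φ) * dotc (g • φ) (b • φ + g • y) =
      (g : ℂ) ^ 2 * dotc x y - (g : ℂ) ^ 4 * (dotc x φ * dotc φ y) := by
  simp only [dotc_add_left, dotc_add_right, dotc_real_smul_left, dotc_real_smul_right]
  linear_combination (-(a : ℂ) * b * dotc φ φ - a * g * dotc φ y - b * g * dotc x φ) * hunit

end dotc

section pder

variable {M D : ℕ} {θ : Fin M → ℝ}

lemma pder_real_smul {g : (Fin M → ℝ) → ℝ} {φ : (Fin M → ℝ) → Fin D → ℂ}
    (hg : DifferentiableAt ℝ g θ) (hφ : DifferentiableAt ℝ φ θ) (i : Fin M) :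
    pder i (fun θ' => g θ' • φ θ') θ = fderiv ℝ g θ (Pi.single i 1) • φ θ + g θ • pder i φ θ := by
  rw [pder, fderiv_fun_smul hg hφ]
  simp only [_root_.add_apply, _root_.smul_apply, ContinuousLinearMap.smulRight_apply, pder]
  exact add_comm _ _

lemma pder_mulVec (K : Matrix (Fin D) (Fin D) ℂ) {φ : (Fin M → ℝ) → Fin D → ℂ}
    (hφ : DifferentiableAt ℝ φ θ) (i : Fin M) :
    pder i (fun θ' => K *ᵥ φ θ') θ = K *ᵥ pder i φ θ := by
  let L : (Fin D → ℂ) →L[ℝ] Fin D → ℂ :=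
    LinearMap.toContinuousLinearMap ((mulVecLin K).restrictScalars ℝ)
  change fderiv ℝ (L ∘ φ) θ _ = L _
  rw [fderiv_comp θ L.differentiableAt hφ, L.fderiv]
  rfl

lemma qfim_real_smul {g : (Fin M → ℝ) → ℝ} {φ : (Fin M → ℝ) → Fin D → ℂ}
    (hg : DifferentiableAt ℝ g θ) (hφ : DifferentiableAt ℝ φ θ)
    (hunit : (g θ : ℂ) ^ 2 * dotc (φ θ) (φ θ) = 1) (i j : Fin M) :
    qfim (fun θ' => g θ' • φ θ') θ i j =
      4 * ((g θ : ℂ) ^ 2 * dotc (pder i φ θ) (pder j φ θ) -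
        (g θ : ℂ) ^ 4 * (dotc (pder i φ θ) (φ θ) * dotc (φ θ) (pder j φ θ))).re := by
  rw [qfim, pder_real_smul hg hφ, pder_real_smul hg hφ,
    dotc_sub_dotc_mul_dotc_of_real_smul _ _ _ _ _ _ hunit]

end pder

open Matrix in
theorem psqfim_formula_general
    (M D : ℕ) (ψ : (Fin M → ℝ) → (Fin D → ℂ))
    (hψ : Differentiable ℝ ψ)
    (K : Matrix (Fin D) (Fin D) ℂ) (F : Matrix (Fin D) (Fin D) ℂ)
    (hF : F = Kᴴ * K)
    (p : (Fin M → ℝ) → ℝ)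
    (hp : ∀ θ, p θ = (dotc (ψ θ) (F.mulVec (ψ θ))).re)
    (θ : Fin M → ℝ)
    (hppos : ∀ᶠ θ' in nhds θ, 0 < p θ')
    (ψps : (Fin M → ℝ) → (Fin D → ℂ))
    (hψps : ∀ θ', ψps θ' = (Real.sqrt (p θ'))⁻¹ • K.mulVec (ψ θ')) :
    dotc (ψps θ) (ψps θ) = 1 ∧
    ∀ i j, qfim ψps θ i j =
      4 * (dotc (pder i ψ θ) (F.mulVec (pder j ψ θ)) / (p θ : ℂ) -
            dotc (pder i ψ θ) (F.mulVec (ψ θ)) * dotc (ψ θ) (F.mulVec (pder j ψ θ)) /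
              (p θ : ℂ) ^ 2).re := by
  have hpθ : 0 < p θ := hppos.self_of_nhds
  have hKψ : dotc (K *ᵥ ψ θ) (K *ᵥ ψ θ) = p θ := by
    rw [dotc_self_eq_re, dotc_mulVec_mulVec, ← hF, hp]
  have hscale_sq : (((√(p θ))⁻¹ : ℝ) : ℂ) ^ 2 = (p θ : ℂ)⁻¹ := by
    rw [← Complex.ofReal_pow, inv_pow, Real.sq_sqrt hpθ.le, Complex.ofReal_inv]
  have hunit : (((√(p θ))⁻¹ : ℝ) : ℂ) ^ 2 * dotc (K *ᵥ ψ θ) (K *ᵥ ψ θ) = 1 := by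
    rw [hscale_sq, hKψ, inv_mul_cancel₀ (Complex.ofReal_ne_zero.mpr hpθ.ne')]
  have hp_diff : DifferentiableAt ℝ p θ := by
    rw [show p = fun θ' => (dotc (ψ θ') (F *ᵥ ψ θ')).re from funext hp]
    exact Complex.reCLM.differentiableAt.comp θ ((hψ θ).dotc ((hψ θ).mulVec F))
  have hscale_diff : DifferentiableAt ℝ (fun θ' => (√(p θ'))⁻¹) θ :=
    (hp_diff.sqrt hpθ.ne').inv (Real.sqrt_pos.mpr hpθ).ne'
  refine ⟨?_, fun i j => ?_⟩
  · rw [hψps, dotc_real_smul_left, dotc_real_smul_right, ← mul_assoc, ← sq, hunit]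
  · rw [show ψps = fun θ' => (√(p θ'))⁻¹ • K *ᵥ ψ θ' from funext hψps,
      qfim_real_smul hscale_diff ((hψ θ).mulVec K) hunit, pder_mulVec K (hψ θ),
      pder_mulVec K (hψ θ), dotc_mulVec_mulVec, dotc_mulVec_mulVec, dotc_mulVec_mulVec, ← hF,
      div_eq_mul_inv, div_eq_mul_inv, ← inv_pow, ← hscale_sq]
    ring_nf

open Matrix in
/-- The postselected family `ψ^{ps} = Kψ/√p` consists of unit vectors, and its pure-state
QFIM is given by the postselected formula of Eq. (8) of the paper (in inner-product form). -/
theorem psqfim_formula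
    (M D : ℕ) (ψ : (Fin M → ℝ) → (Fin D → ℂ))
    (hψ : Differentiable ℝ ψ)
    (hunit : ∀ θ, dotc (ψ θ) (ψ θ) = 1)
    (K : Matrix (Fin D) (Fin D) ℂ) (F : Matrix (Fin D) (Fin D) ℂ)
    (hF : F = Kᴴ * K)
    (p : (Fin M → ℝ) → ℝ)
    (hp : ∀ θ, p θ = (dotc (ψ θ) (F.mulVec (ψ θ))).re)
    (θ : Fin M → ℝ)
    (hppos : ∀ᶠ θ' in nhds θ, 0 < p θ')
    (ψps : (Fin M → ℝ) → (Fin D → ℂ))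
    (hψps : ∀ θ', ψps θ' = (Real.sqrt (p θ'))⁻¹ • K.mulVec (ψ θ')) :
    dotc (ψps θ) (ψps θ) = 1 ∧
    ∀ i j, qfim ψps θ i j =
      4 * (dotc (pder i ψ θ) (F.mulVec (pder j ψ θ)) / (p θ : ℂ) -
            dotc (pder i ψ θ) (F.mulVec (ψ θ)) * dotc (ψ θ) (F.mulVec (pder j ψ θ)) /
              (p θ : ℂ) ^ 2).re :=
  psqfim_formula_general M D ψ hψ K F hF p hp θ hppos ψps hψps
end
end

section
/- Let σ_x = [[0,1],[1,0]] and σ_z = [[1,0],[0,−1]] be the Pauli matrices, and for (θ₁, θ₂) ∈ ℝ² define the unit vector ψ(θ₁, θ₂) = exp(i (σ_x + σ_z) θ₂ / √2) · exp(i σ_x θ₁) · (1, 0)ᵀ ∈ ℂ². Then the pure-state quantum Fisher information matrix of this family equals 𝓘(θ | ψ) = [[4, 2√2], [2√2, 3 − cos(4θ₁)]]; that is, 𝓘_{11} = 4, 𝓘_{12} = 𝓘_{21} = 2√2, and 𝓘_{22} = 3 − cos(4θ₁) for all (θ₁, θ₂). -/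
/-!
Write `ψ(θ) = U(θ₂) φ(θ₁)` with `U(θ₂) = exp(iθ₂H)`, where `H = (σ_x + σ_z)/√2` is the Hadamard
gate, and `φ(θ₁) = exp(iθ₁σ_x)|0⟩ = (cos θ₁, i sin θ₁)`. Since `U` commutes with `H`, both partial
derivatives have the form `∂ᵢψ = i U Gᵢ φ` with `G₁ = σ_x`, `G₂ = H`; as `H` is Hermitian, `U` is
unitary and drops out of every inner product, and the QFIM becomes four times the covariance matrix
`Re(⟨Gᵢφ, Gⱼφ⟩ - ⟨Gᵢφ, φ⟩⟨φ, Gⱼφ⟩)` of the generators in the state `φ`. There `⟨σ_x⟩ = 0`,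
`Re⟨σ_xφ, Hφ⟩ = 1/√2` and `⟨H⟩ = cos 2θ₁/√2`, so `𝓘₂₂ = 4 - 2cos² 2θ₁ = 3 - cos 4θ₁`.
-/

noncomputable section

open Matrix

/-- The Pauli matrix `σ_x`. -/
def sigmaX : Matrix (Fin 2) (Fin 2) ℂ := !![0, 1; 1, 0]

/-- The Pauli matrix `σ_z`. -/
def sigmaZ : Matrix (Fin 2) (Fin 2) ℂ := !![1, 0; 0, -1]

open Complex ComplexConjugate

section
variable {𝔸 : Type*} [NormedRing 𝔸] [NormedAlgebra ℂ 𝔸] [CompleteSpace 𝔸]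

theorem exp_smul_of_mul_self_eq_one {A : 𝔸} (hA : A * A = 1) (z : ℂ) :
    NormedSpace.exp (z • A) = cosh z • (1 : 𝔸) + sinh z • A := by
  have hpow (n : ℕ) : A ^ (2 * n) = 1 := by rw [pow_mul, sq, hA, one_pow]
  refine (NormedSpace.exp_series_hasSum_exp' (𝕂 := ℂ) (z • A)).unique ?_
  refine HasSum.even_add_odd ?_ ?_
  · convert (hasSum_cosh z).smul_const (1 : 𝔸) using 2 with n
    rw [smul_pow, hpow, smul_smul, div_eq_inv_mul]
  · convert (hasSum_sinh z).smul_const A using 2 with n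
    rw [smul_pow, pow_succ A, hpow, one_mul, smul_smul, div_eq_inv_mul]

theorem exp_I_mul_smul_of_mul_self_eq_one {A : 𝔸} (hA : A * A = 1) (t : ℝ) :
    NormedSpace.exp ((I * t) • A) = (Real.cos t : ℂ) • (1 : 𝔸) + (I * Real.sin t) • A := by
  rw [exp_smul_of_mul_self_eq_one hA, mul_comm, cosh_mul_I, sinh_mul_I, ofReal_cos, ofReal_sin,
    mul_comm]

theorem hasDerivAt_exp_I_mul_smul (A : 𝔸) (t : ℝ) :
    HasDerivAt (fun s : ℝ => NormedSpace.exp ((I * s) • A))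
      (I • (NormedSpace.exp ((I * t) • A) * A)) t := by
  have := (hasDerivAt_exp_smul_const (𝕂 := ℂ) (I • A) (t : ℂ)).scomp t ofRealCLM.hasDerivAt
  simpa only [smul_smul, mul_comm, Function.comp_def, ofRealCLM_apply, ofReal_one, mul_one,
    mul_smul_comm] using this

end

/- Matrices carry no global norm. The statements below only involve the product topology, which
the operator norm of `Matrix.Norms.Operator` induces, so that norm is opened just inside proofs. -/

section
variable {n : Type*} [Fintype n] [DecidableEq n]

theorem Matrix.exp_I_mul_smul_of_mul_self_eq_one {A : Matrix n n ℂ} (hA : A * A = 1) (t : ℝ) :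
    NormedSpace.exp ((I * t) • A) =
      (Real.cos t : ℂ) • (1 : Matrix n n ℂ) + (I * Real.sin t) • A := by
  open scoped Matrix.Norms.Operator in exact _root_.exp_I_mul_smul_of_mul_self_eq_one hA t

theorem Matrix.hasDerivAt_exp_I_mul_smul (A : Matrix n n ℂ) (t : ℝ) :
    HasDerivAt (fun s : ℝ => NormedSpace.exp ((I * s) • A))
      (I • (NormedSpace.exp ((I * t) • A) * A)) t := by
  open scoped Matrix.Norms.Operator in exact _root_.hasDerivAt_exp_I_mul_smul A t

theorem Matrix.IsHermitian.exp_I_mul_smul_mem_unitaryGroup {A : Matrix n n ℂ}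
    (hA : A.IsHermitian) (t : ℝ) : NormedSpace.exp ((I * t) • A) ∈ Matrix.unitaryGroup n ℂ := by
  have hskew : ((I * t) • A)ᴴ = -((I * t) • A) := by
    rw [conjTranspose_smul, hA.eq, star_mul', Complex.star_def, conj_I, conj_ofReal, neg_mul,
      neg_smul]
  rw [mem_unitaryGroup_iff', star_eq_conjTranspose, ← Matrix.exp_conjTranspose, hskew,
    ← Matrix.exp_add_of_commute _ _ (Commute.refl ((I * t) • A)).neg_left, neg_add_cancel,
    NormedSpace.exp_zero]

end

section
variable {m n : Type*} [Fintype m] [Fintype n]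

theorem HasDerivAt.mulVec_const {M : ℝ → Matrix m n ℂ} {M' : Matrix m n ℂ} {t : ℝ}
    (h : HasDerivAt M M' t) (v : n → ℂ) : HasDerivAt (fun s => M s *ᵥ v) (M' *ᵥ v) t := by
  open scoped Matrix.Norms.Operator in
  exact (LinearMap.toContinuousLinearMap ((mulVecBilin ℝ ℝ).flip v)).hasFDerivAt.comp_hasDerivAt t h

theorem DifferentiableAt.mulVec_const {E : Type*} [NormedAddCommGroup E] [NormedSpace ℝ E]
    {M : E → Matrix m n ℂ} {x : E} (h : DifferentiableAt ℝ M x) (v : n → ℂ) :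
    DifferentiableAt ℝ (fun y => M y *ᵥ v) x := by
  open scoped Matrix.Norms.Operator in
  exact (LinearMap.toContinuousLinearMap ((mulVecBilin ℝ ℝ).flip v)).differentiableAt.comp x h

end

theorem pder_eq_of_hasDerivAt_update {M D : ℕ} {φ : (Fin M → ℝ) → Fin D → ℂ} {θ : Fin M → ℝ}
    {i : Fin M} {v : Fin D → ℂ} (hφ : DifferentiableAt ℝ φ θ)
    (hv : HasDerivAt (fun t => φ (Function.update θ i t)) v (θ i)) : pder i φ θ = v := by
  have hφ' : HasFDerivAt φ (fderiv ℝ φ θ) (Function.update θ i (θ i)) := by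
    rw [Function.update_eq_self]
    exact hφ.hasFDerivAt
  exact (hφ'.comp_hasDerivAt (θ i) (hasDerivAt_update θ i (θ i))).unique hv

section
variable {D : ℕ}

theorem dotc_smul_left (c : ℂ) (x y : Fin D → ℂ) : dotc (c • x) y = conj c * dotc x y := by
  simp only [dotc, Finset.mul_sum, Pi.smul_apply, smul_eq_mul, map_mul, mul_assoc]

theorem dotc_smul_right (c : ℂ) (x y : Fin D → ℂ) : dotc x (c • y) = c * dotc x y := by
  simp only [dotc, Finset.mul_sum, Pi.smul_apply, smul_eq_mul, mul_left_comm]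

theorem dotc_mulVec_mulVec_of_mem_unitaryGroup {U : Matrix (Fin D) (Fin D) ℂ}
    (hU : U ∈ unitaryGroup (Fin D) ℂ) (x y : Fin D → ℂ) :
    dotc (U *ᵥ x) (U *ᵥ y) = dotc x y := by
  have hdotc (x y : Fin D → ℂ) : dotc x y = star x ⬝ᵥ y := rfl
  rw [hdotc, hdotc, star_mulVec, ← dotProduct_mulVec, mulVec_mulVec, ← star_eq_conjTranspose,
    mem_unitaryGroup_iff'.mp hU, one_mulVec]

theorem qfim_eq_covariance_of_pder_eq {M : ℕ} {ψ : (Fin M → ℝ) → Fin D → ℂ} {θ : Fin M → ℝ}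
    {U : Matrix (Fin D) (Fin D) ℂ} (hU : U ∈ unitaryGroup (Fin D) ℂ) {φ : Fin D → ℂ}
    {G : Fin M → Matrix (Fin D) (Fin D) ℂ} (hψ : ψ θ = U *ᵥ φ)
    (hpder : ∀ i, pder i ψ θ = I • (U *ᵥ (G i *ᵥ φ))) (i j : Fin M) :
    qfim ψ θ i j =
      4 * (dotc (G i *ᵥ φ) (G j *ᵥ φ) - dotc (G i *ᵥ φ) φ * dotc φ (G j *ᵥ φ)).re := by
  have hI : conj I * I = 1 := by rw [conj_I, neg_mul, I_mul_I, neg_neg]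
  simp only [qfim, hpder, hψ, dotc_smul_left, dotc_smul_right,
    dotc_mulVec_mulVec_of_mem_unitaryGroup hU]
  congr 2
  linear_combination (dotc (G i *ᵥ φ) (G j *ᵥ φ) - dotc (G i *ᵥ φ) φ * dotc φ (G j *ᵥ φ)) * hI

theorem qfim_exp_mul_exp_mulVec {A B : Matrix (Fin D) (Fin D) ℂ} (hB : B.IsHermitian)
    (v : Fin D → ℂ) (θ : Fin 2 → ℝ) (i j : Fin 2) :
    qfim (fun θ => (NormedSpace.exp ((I * θ 1) • B) * NormedSpace.exp ((I * θ 0) • A)) *ᵥ v)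
        θ i j =
      let φ := NormedSpace.exp ((I * θ 0) • A) *ᵥ v
      let G := ![A, B]
      4 * (dotc (G i *ᵥ φ) (G j *ᵥ φ) - dotc (G i *ᵥ φ) φ * dotc φ (G j *ᵥ φ)).re := by
  have hdiff : DifferentiableAt ℝ (fun θ : Fin 2 → ℝ =>
      (NormedSpace.exp ((I * θ 1) • B) * NormedSpace.exp ((I * θ 0) • A)) *ᵥ v) θ := by
    refine DifferentiableAt.mulVec_const ?_ v
    open scoped Matrix.Norms.Operator in
    exact ((B.hasDerivAt_exp_I_mul_smul _).differentiableAt.comp θ (differentiableAt_apply 1 θ)).mul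
      ((A.hasDerivAt_exp_I_mul_smul _).differentiableAt.comp θ (differentiableAt_apply 0 θ))
  refine qfim_eq_covariance_of_pder_eq (hB.exp_I_mul_smul_mem_unitaryGroup _)
    (mulVec_mulVec _ _ _).symm (Fin.forall_fin_two.mpr ⟨pder_eq_of_hasDerivAt_update hdiff ?_,
      pder_eq_of_hasDerivAt_update hdiff ?_⟩) i j
  · have hderiv := open scoped Matrix.Norms.Operator in
      ((A.hasDerivAt_exp_I_mul_smul (θ 0)).const_mul (NormedSpace.exp ((I * θ 1) • B))).mulVec_const v
    convert hderiv using 1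
    · simp
    · have hcomm := ((Commute.refl A).smul_right (I * θ 0)).exp_right
      simp only [cons_val_zero, mulVec_mulVec, Matrix.mul_smul, smul_mulVec, hcomm.eq]
  · have hderiv := open scoped Matrix.Norms.Operator in
      ((B.hasDerivAt_exp_I_mul_smul (θ 1)).mul_const (NormedSpace.exp ((I * θ 0) • A))).mulVec_const v
    convert hderiv using 1
    · simp
    · simp only [cons_val_one, cons_val_zero, mulVec_mulVec, Matrix.smul_mul, smul_mulVec,
        mul_assoc]

end

theorem dotc_fin_two (a b c d : ℂ) : dotc ![a, b] ![c, d] = conj a * c + conj b * d := by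
  simp [dotc, Fin.sum_univ_two]

def hadamardGate : Matrix (Fin 2) (Fin 2) ℂ := ((Real.sqrt 2 : ℝ) : ℂ)⁻¹ • (sigmaX + sigmaZ)

theorem hadamardGate_isHermitian : hadamardGate.IsHermitian := by
  ext i j
  fin_cases i <;> fin_cases j <;> simp [hadamardGate, sigmaX, sigmaZ]

theorem hadamardGate_mulVec (a b : ℂ) :
    hadamardGate *ᵥ ![a, b] = ((Real.sqrt 2 : ℝ) : ℂ)⁻¹ • ![a + b, a - b] := by
  ext i
  fin_cases i <;> simp [hadamardGate, sigmaX, sigmaZ, mulVec, dotProduct, Fin.sum_univ_two] <;> ring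

theorem sigmaX_mul_self : sigmaX * sigmaX = 1 := by
  simp [sigmaX, one_fin_two]

theorem sigmaX_mulVec (a b : ℂ) : sigmaX *ᵥ ![a, b] = ![b, a] := by
  ext i
  fin_cases i <;> simp [sigmaX, mulVec, dotProduct, Fin.sum_univ_two]

theorem exp_I_mul_smul_sigmaX_mulVec (t : ℝ) :
    NormedSpace.exp ((I * t) • sigmaX) *ᵥ ![1, 0] = ![(Real.cos t : ℂ), I * Real.sin t] := by
  rw [Matrix.exp_I_mul_smul_of_mul_self_eq_one sigmaX_mul_self, add_mulVec, smul_mulVec,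
    smul_mulVec, one_mulVec, sigmaX_mulVec]
  ext i
  fin_cases i <;> simp

/-- **The qubit example of the paper.** For
`ψ(θ) = exp(i(σ_x+σ_z)θ₂/√2) exp(iσ_x θ₁) |0⟩`, the QFIM is
`[[4, 2√2], [2√2, 3 − cos 4θ₁]]`. -/
theorem qubit_example_qfim
    (ψ : (Fin 2 → ℝ) → (Fin 2 → ℂ))
    (hψ : ∀ θ, ψ θ =
      (NormedSpace.exp ((Complex.I * (θ 1 : ℂ) / (Real.sqrt 2 : ℂ)) • (sigmaX + sigmaZ)) *
        NormedSpace.exp ((Complex.I * (θ 0 : ℂ)) • sigmaX)).mulVec ![1, 0]) :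
    ∀ θ : Fin 2 → ℝ,
      qfim ψ θ 0 0 = 4 ∧
      qfim ψ θ 0 1 = 2 * Real.sqrt 2 ∧
      qfim ψ θ 1 0 = 2 * Real.sqrt 2 ∧
      qfim ψ θ 1 1 = 3 - Real.cos (4 * θ 0) := by
  obtain rfl : ψ = fun θ : Fin 2 → ℝ => (NormedSpace.exp ((I * θ 1) • hadamardGate) *
      NormedSpace.exp ((I * θ 0) • sigmaX)) *ᵥ ![1, 0] := by
    funext θ
    rw [hψ, hadamardGate, smul_smul, div_eq_mul_inv]
  intro θ
  simp only [qfim_exp_mul_exp_mulVec hadamardGate_isHermitian, exp_I_mul_smul_sigmaX_mulVec,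
    cons_val_zero, cons_val_one, sigmaX_mulVec, hadamardGate_mulVec, dotc_smul_left,
    dotc_smul_right, dotc_fin_two]
  simp only [← ofReal_inv, map_mul, map_add, map_sub, conj_ofReal, conj_I, mul_re, add_re, sub_re,
    mul_im, add_im, sub_im, ofReal_re, ofReal_im, I_re, I_im, neg_re, neg_im, neg_mul]
  have hs := Real.sin_sq_add_cos_sq (θ 0)
  have hr : (√2)⁻¹ ^ 2 = (1 / 2 : ℝ) := by rw [inv_pow, Real.sq_sqrt zero_le_two]; norm_num
  have h2 : (2 : ℝ) / √2 = √2 := Real.div_sqrt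
  refine ⟨?_, ?_, ?_, ?_⟩ <;> ring_nf
  · linear_combination 4 * hs
  · linear_combination 4 * (√2)⁻¹ * hs + 2 * h2
  · linear_combination 4 * (√2)⁻¹ * hs + 2 * h2
  · rw [hr, show θ 0 * 4 = 2 * (2 * θ 0) by ring, Real.cos_two_mul, Real.cos_two_mul]
    linear_combination (6 * Real.cos (θ 0) ^ 2 - 2 * Real.sin (θ 0) ^ 2 + 2) * hs
end
end
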